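/- arXiv:1108.2290 — 4 statements merged into one kernel-verified Lean document; each statement's English description precedes it below -/
import Mathlib

section
/- Every connected rooted tree T on n ≥ 2 vertices admits a monotone coloring χ of its edges such that every root-leaf path in T contains at most 1 + log₂ n distinct colors; in particular M(χ) ≤ 1 + log₂ n. -/
open scoped Classical

noncomputable section

/-- A finite rooted metric tree.  Each non-root vertex `v` determines the edge
`(v, parent v)`; edges are identified with their lower endpoints. -/
structure FinTree : Type 1 where
  V : Type
  fin : Fintype V
  root : V
  parent : V → V
  parent_root : parent root = root
  reaches_root : ∀ v : V, ∃ n : ℕ, parent^[n] v = root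
  len : V → ℝ
  len_nonneg : ∀ v : V, 0 ≤ len v

attribute [instance] FinTree.fin

namespace FinTree

variable (T : FinTree)

/-- `u` is a (weak) ancestor of `v`. -/
def Anc (u v : T.V) : Prop := ∃ n : ℕ, T.parent^[n] v = u

/-- The set of edges (identified with their lower endpoints) on the path `P_v`
from the root to `v`. -/
def pathToRoot (v : T.V) : Finset T.V :=
  Finset.univ.filter fun u => u ≠ T.root ∧ T.Anc u v

/-- The set of edges on the unique path between `x` and `y`. -/
def pathEdges (x y : T.V) : Finset T.V :=
  (T.pathToRoot x \ T.pathToRoot y) ∪ (T.pathToRoot y \ T.pathToRoot x)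

/-- The shortest-path pseudometric `d_T` of the tree. -/
def dist (x y : T.V) : ℝ := ∑ e ∈ T.pathEdges x y, T.len e

/-- The set of all edges of the tree. -/
def edges : Finset T.V := Finset.univ.filter fun u => u ≠ T.root

/-- The depth of a vertex (number of edges on the path to the root). -/
def depth (v : T.V) : ℕ := Nat.find (T.reaches_root v)

/-- `x` lies on the path between `a` and `b`. -/
def OnPath (x a b : T.V) : Prop := T.pathEdges a x ⊆ T.pathEdges a b

/-- `T` is the complete `k`-ary tree of height `h` with unit edge lengths. -/
def IsCompleteKAry (k h : ℕ) : Prop :=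
  (∀ v : T.V, v ≠ T.root → T.len v = 1) ∧
  (∀ v : T.V, T.depth v ≤ h) ∧
  ∀ v : T.V, T.depth v < h →
    (Finset.univ.filter fun u : T.V => T.parent u = v ∧ u ≠ v).card = k

/-- A monotone coloring: every color class is a connected subset of the edge
set of some root-leaf path. -/
def IsMonotone (χ : T.V → ℕ) : Prop :=
  ∀ u v : T.V, u ≠ T.root → v ≠ T.root → χ u = χ v →
    (T.Anc u v ∨ T.Anc v u) ∧
      ∀ w : T.V, w ≠ T.root → T.Anc u w → T.Anc w v → χ w = χ u

/-- The multiplicity `M(χ)` of a coloring. -/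
def mult (χ : T.V → ℕ) : ℕ :=
  Finset.univ.sup fun v : T.V => ((T.pathToRoot v).image χ).card

/-- `len_χ(c)`: the total length of the color class of `c`. -/
def colorLen (χ : T.V → ℕ) (c : ℕ) : ℝ :=
  ∑ e ∈ T.edges.filter (fun e => χ e = c), T.len e

/-- The set of colors `C_χ(x,y;δ)`. -/
def sigColors (χ : T.V → ℕ) (x y : T.V) (δ : ℝ) : Finset ℕ :=
  (((T.pathToRoot x).image χ \ (T.pathToRoot y).image χ) ∪
      ((T.pathToRoot y).image χ \ (T.pathToRoot x).image χ)).filter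
    fun c => (∑ e ∈ (T.pathEdges x y).filter (fun e => χ e = c), T.len e) ≤ δ * T.colorLen χ c

/-- `ρ_χ(x,y;δ)`. -/
def rho (χ : T.V → ℕ) (x y : T.V) (δ : ℝ) : ℝ :=
  ∑ c ∈ T.sigColors χ x y δ, T.colorLen χ c

/-- The topmost edge of the color class of `c` (junk value if none exists). -/
def topEdge (χ : T.V → ℕ) (c : ℕ) : T.V :=
  if h : ∃ e : T.V, e ≠ T.root ∧ χ e = c ∧ ∀ e' : T.V, e' ≠ T.root → χ e' = c → T.Anc e e'
  then h.choose else T.root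

/-- `v_c`: the vertex of `γ_c` closest to the root. -/
def vcol (χ : T.V → ℕ) (c : ℕ) : T.V := T.parent (T.topEdge χ c)

/-- The edge set `E(T(c))` of the subtree under the color `c`; for the root
color `c₀` it is all of `E`. -/
def subEdges (χ : T.V → ℕ) (c₀ c : ℕ) : Finset T.V :=
  if c = c₀ then T.edges else T.edges.filter fun e => T.Anc (T.topEdge χ c) e

/-- The parent color `ρ(c) = χ(v_c, p(v_c))`, with the convention
`χ(r,r) = c₀`. -/
def parentColor (χ : T.V → ℕ) (c₀ c : ℕ) : ℕ :=
  if T.vcol χ c = T.root then c₀ else χ (T.vcol χ c)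

/-- `κ(c) = ⌊log₂(|E(T(ρ(c)))| / |E(T(c))|)⌋ + 1`. -/
def kappa (χ : T.V → ℕ) (c₀ c : ℕ) : ℤ :=
  ⌊Real.logb 2 (((T.subEdges χ c₀ (T.parentColor χ c₀ c)).card : ℝ) /
      ((T.subEdges χ c₀ c).card : ℝ))⌋ + 1

/-- `φ(c₀) = 0` and `φ(c) = κ(c) + φ(ρ(c))`; equivalently
`φ(c) = Σ_{c' ∈ χ(E(P_{v_c})) ∪ {c}} κ(c')`. -/
def phi (χ : T.V → ℕ) (c₀ c : ℕ) : ℤ :=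
  if c = c₀ then 0
  else T.kappa χ c₀ c + ∑ c' ∈ (T.pathToRoot (T.vcol χ c)).image χ, T.kappa χ c₀ c'

/-- `m(T)`: the minimum positive edge length. -/
def minLen : ℝ := sInf {x : ℝ | ∃ e : T.V, e ≠ T.root ∧ 0 < T.len e ∧ T.len e = x}

/-- `⌊log₂( m(T) / (M(χ) + log₂|E|) )⌋`, the scale below which all `τ_i` vanish. -/
def iMin (χ : T.V → ℕ) : ℤ :=
  ⌊Real.logb 2 (T.minLen / ((T.mult χ : ℝ) + Real.logb 2 (T.edges.card : ℝ)))⌋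

/-- `τ` is the family of scale selectors: `τ_i(v) = 0` for `i < iMin`, and for
`i ≥ iMin`,
`τ_i(v) = min( ⌈(d_T(v,v_c) − min(d_T(v,v_c), Σ_{j<i} 2^j τ_j(v)))/2^i⌉,
               φ(c) − Σ_{c' ∈ χ(E(P_v))} τ_i(v_{c'}) )` where `c = χ(v,p(v))`. -/
def IsScaleSelector (χ : T.V → ℕ) (c₀ : ℕ) (τ : ℤ → T.V → ℕ) : Prop :=
  (∀ v : T.V, ∀ i : ℤ, i < T.iMin χ → τ i v = 0) ∧
  ∀ v : T.V, v ≠ T.root → ∀ i : ℤ, T.iMin χ ≤ i →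
    (τ i v : ℤ) =
      min
        ⌈(T.dist v (T.vcol χ (χ v)) -
            min (T.dist v (T.vcol χ (χ v)))
              (∑ j ∈ Finset.Ico (T.iMin χ) i, (2 : ℝ) ^ j * (τ j v : ℝ))) / (2 : ℝ) ^ i⌉
        (T.phi χ c₀ (χ v) - ∑ c' ∈ (T.pathToRoot v).image χ, (τ i (T.vcol χ c') : ℤ))

/-- The matrix `Δ_i(v) ∈ ℝ^{m×t}`. -/
def Delta (χ : T.V → ℕ) (c₀ : ℕ) (τ : ℤ → T.V → ℕ) (m t : ℕ) (i : ℤ) (v : T.V) :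
    Matrix (Fin m) (Fin t) ℝ := fun j k =>
  let d : ℝ := T.dist v (T.vcol χ (χ v))
  let s : ℝ := ∑ l ∈ Finset.Ico (T.iMin χ) i, (2 : ℝ) ^ l * (τ l v : ℝ)
  let α : ℤ := ∑ c' ∈ (T.pathToRoot v).image χ, ((t : ℤ) ^ 2 * (τ i (T.vcol χ c') : ℤ))
  let β : ℤ := α + min ((t : ℤ) ^ 2 * (τ i v : ℤ)) ⌊(d - s) * (t : ℝ) ^ 2 / (2 : ℝ) ^ i⌋
  if (k : ℕ) = 0 then
    if α < (j : ℤ) + 1 ∧ (j : ℤ) + 1 ≤ β then (2 : ℝ) ^ i / (t : ℝ) ^ 2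
    else if (j : ℤ) + 1 = β + 1 ∧ β - α < (t : ℤ) ^ 2 * (τ i v : ℤ) then
      d - (s + ((β - α : ℤ) : ℝ) * ((2 : ℝ) ^ i / (t : ℝ) ^ 2))
    else 0
  else 0

end FinTree

/-- The entrywise ℓ₁ norm of a matrix. -/
def matOne {m t : ℕ} (A : Matrix (Fin m) (Fin t) ℝ) : ℝ := ∑ j, ∑ k, |A j k|

/-! ### Auxiliary development: heavy-path decomposition -/

namespace FinTree

variable (T : FinTree)

lemma parent_iterate_root (n : ℕ) : T.parent^[n] T.root = T.root := by
  induction n with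
  | zero => rfl
  | succ n ih => rw [Function.iterate_succ_apply', ih, T.parent_root]

lemma depth_spec (v : T.V) : T.parent^[T.depth v] v = T.root :=
  Nat.find_spec (T.reaches_root v)

lemma depth_root : T.depth T.root = 0 :=
  Nat.le_zero.mp (Nat.find_le (by simp))

lemma eq_root_of_depth_eq_zero {v : T.V} (h : T.depth v = 0) : v = T.root := by
  have := T.depth_spec v
  rwa [h] at this

lemma depth_parent {v : T.V} (hv : v ≠ T.root) :
    T.depth (T.parent v) + 1 = T.depth v := by
  have hd0 : T.depth v ≠ 0 := fun h => hv (T.eq_root_of_depth_eq_zero h)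
  obtain ⟨m, hm⟩ : ∃ m, T.depth v = m + 1 := ⟨T.depth v - 1, by omega⟩
  have h1 : T.parent^[m] (T.parent v) = T.root := by
    have := T.depth_spec v
    rwa [hm, Function.iterate_succ_apply] at this
  have hle : T.depth (T.parent v) ≤ m := Nat.find_le h1
  have hge : m ≤ T.depth (T.parent v) := by
    by_contra hlt
    push_neg at hlt
    have h2 : T.parent^[T.depth (T.parent v) + 1] v = T.root := by
      rw [Function.iterate_succ_apply]
      exact T.depth_spec (T.parent v)
    have h3 : T.depth v ≤ T.depth (T.parent v) + 1 := Nat.find_le h2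
    omega
  omega

lemma depth_parent_le (v : T.V) : T.depth (T.parent v) ≤ T.depth v := by
  by_cases hv : v = T.root
  · rw [hv, T.parent_root]
  · have := T.depth_parent hv; omega

lemma depth_iterate_le (n : ℕ) (v : T.V) : T.depth (T.parent^[n] v) ≤ T.depth v := by
  induction n with
  | zero => exact le_rfl
  | succ n ih =>
    rw [Function.iterate_succ_apply']
    exact le_trans (T.depth_parent_le _) ih

lemma anc_refl (v : T.V) : T.Anc v v := ⟨0, rfl⟩

lemma anc_parent (v : T.V) : T.Anc (T.parent v) v := ⟨1, rfl⟩

lemma anc_trans {a b c : T.V} (h1 : T.Anc a b) (h2 : T.Anc b c) : T.Anc a c := by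
  obtain ⟨n, hn⟩ := h1
  obtain ⟨m, hm⟩ := h2
  exact ⟨n + m, by rw [Function.iterate_add_apply, hm, hn]⟩

lemma anc_root (v : T.V) : T.Anc T.root v := ⟨T.depth v, T.depth_spec v⟩

lemma eq_root_of_anc_root {u : T.V} (h : T.Anc u T.root) : u = T.root := by
  obtain ⟨n, hn⟩ := h
  rw [T.parent_iterate_root] at hn
  exact hn.symm

lemma depth_le_of_anc {u v : T.V} (h : T.Anc u v) : T.depth u ≤ T.depth v := by
  obtain ⟨n, hn⟩ := h
  rw [← hn]
  exact T.depth_iterate_le n v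

lemma depth_iterate {v : T.V} {k : ℕ} (h : k ≤ T.depth v) :
    T.depth (T.parent^[k] v) = T.depth v - k := by
  induction k with
  | zero => simp
  | succ k ih =>
    have hk : k ≤ T.depth v := by omega
    have hdk : T.depth (T.parent^[k] v) = T.depth v - k := ih hk
    have hne : T.parent^[k] v ≠ T.root := by
      intro hr
      have : T.depth (T.parent^[k] v) = 0 := by rw [hr, T.depth_root]
      omega
    have := T.depth_parent hne
    rw [Function.iterate_succ_apply']
    omega

lemma eq_of_anc_depth {u v : T.V} (h : T.Anc u v) (hd : T.depth u = T.depth v) :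
    u = v := by
  obtain ⟨n, hn⟩ := h
  rcases Nat.eq_zero_or_pos n with h0 | hp
  · rw [h0] at hn; exact hn.symm
  · by_cases hv : v = T.root
    · subst hv
      rw [T.parent_iterate_root] at hn
      exact hn.symm
    · exfalso
      obtain ⟨m, hm⟩ : ∃ m, n = m + 1 := ⟨n - 1, by omega⟩
      have h1 : T.depth u ≤ T.depth (T.parent v) := by
        rw [← hn, hm, Function.iterate_succ_apply]
        exact T.depth_iterate_le m (T.parent v)
      have := T.depth_parent hv
      omega

lemma anc_antisymm {u v : T.V} (h1 : T.Anc u v) (h2 : T.Anc v u) : u = v :=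
  T.eq_of_anc_depth h1 (le_antisymm (T.depth_le_of_anc h1) (T.depth_le_of_anc h2))

lemma anc_comparable {a b x : T.V} (ha : T.Anc a x) (hb : T.Anc b x) :
    T.Anc a b ∨ T.Anc b a := by
  obtain ⟨n, hn⟩ := ha
  obtain ⟨m, hm⟩ := hb
  rcases le_total n m with h | h
  · right
    exact ⟨m - n, by rw [← hn, ← Function.iterate_add_apply, Nat.sub_add_cancel h, hm]⟩
  · left
    exact ⟨n - m, by rw [← hm, ← Function.iterate_add_apply, Nat.sub_add_cancel h, hn]⟩

lemma anc_parent_of_ne {u v : T.V} (h : T.Anc u v) (hne : u ≠ v) :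
    T.Anc u (T.parent v) := by
  obtain ⟨n, hn⟩ := h
  rcases Nat.eq_zero_or_pos n with h0 | hp
  · rw [h0] at hn; exact absurd hn.symm hne
  · obtain ⟨m, hm⟩ : ∃ m, n = m + 1 := ⟨n - 1, by omega⟩
    exact ⟨m, by rw [← hn, hm, Function.iterate_succ_apply]⟩

lemma mem_pathToRoot {u v : T.V} :
    u ∈ T.pathToRoot v ↔ u ≠ T.root ∧ T.Anc u v := by
  rw [pathToRoot, Finset.mem_filter]
  simp

lemma pathToRoot_root : T.pathToRoot T.root = ∅ := by
  ext u
  simp only [mem_pathToRoot, Finset.notMem_empty, iff_false, not_and]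
  intro hu h
  exact hu (T.eq_root_of_anc_root h)

lemma pathToRoot_eq {v : T.V} (hv : v ≠ T.root) :
    T.pathToRoot v = insert v (T.pathToRoot (T.parent v)) := by
  ext u
  simp only [mem_pathToRoot, Finset.mem_insert]
  constructor
  · rintro ⟨hu, hanc⟩
    by_cases huv : u = v
    · exact Or.inl huv
    · exact Or.inr ⟨hu, T.anc_parent_of_ne hanc huv⟩
  · rintro (rfl | ⟨hu, h⟩)
    · exact ⟨hv, T.anc_refl u⟩
    · exact ⟨hu, T.anc_trans h (T.anc_parent v)⟩

lemma notMem_parent_path {v : T.V} (hv : v ≠ T.root) :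
    v ∉ T.pathToRoot (T.parent v) := by
  rw [mem_pathToRoot]
  rintro ⟨-, hanc⟩
  have h1 := T.depth_le_of_anc hanc
  have h2 := T.depth_parent hv
  omega

/-- The children of a vertex. -/
def children (p : T.V) : Finset T.V :=
  Finset.univ.filter fun u => T.parent u = p ∧ u ≠ p

/-- The number of vertices in the subtree rooted at `v`. -/
def wt (v : T.V) : ℕ := (Finset.univ.filter fun x => T.Anc v x).card

/-- The heavy child of a vertex. -/
def heavy (p : T.V) : T.V :=
  if h : (T.children p).Nonempty then
    ((T.children p).exists_max_image T.wt h).choose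
  else p

lemma heavy_mem {p : T.V} (h : (T.children p).Nonempty) :
    T.heavy p ∈ T.children p := by
  rw [heavy, dif_pos h]
  exact ((T.children p).exists_max_image T.wt h).choose_spec.1

lemma wt_le_heavy {p u : T.V} (h : (T.children p).Nonempty)
    (hu : u ∈ T.children p) : T.wt u ≤ T.wt (T.heavy p) := by
  rw [heavy, dif_pos h]
  exact ((T.children p).exists_max_image T.wt h).choose_spec.2 u hu

lemma wt_pos (v : T.V) : 0 < T.wt v := by
  rw [wt]
  exact Finset.card_pos.mpr ⟨v, by simp [T.anc_refl v]⟩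

lemma wt_le_of_anc {u v : T.V} (h : T.Anc u v) : T.wt v ≤ T.wt u := by
  apply Finset.card_le_card
  intro x hx
  simp only [Finset.mem_filter, Finset.mem_univ, true_and] at hx ⊢
  exact T.anc_trans h hx

lemma wt_root : T.wt T.root = Fintype.card T.V := by
  rw [wt]
  rw [Finset.filter_true_of_mem fun x _ => T.anc_root x]
  exact Finset.card_univ

lemma child_ne_root {p u : T.V} (hu : u ∈ T.children p) : u ≠ T.root := by
  simp only [children, Finset.mem_filter, Finset.mem_univ, true_and] at hu
  intro hr
  apply hu.2
  subst hr
  exact (T.parent_root.symm).trans hu.1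

lemma depth_child {p u : T.V} (hu : u ∈ T.children p) :
    T.depth u = T.depth p + 1 := by
  have h1 := T.depth_parent (T.child_ne_root hu)
  simp only [children, Finset.mem_filter, Finset.mem_univ, true_and] at hu
  rw [hu.1] at h1
  omega

lemma children_wt_add {p a b : T.V} (ha : a ∈ T.children p) (hb : b ∈ T.children p)
    (hne : a ≠ b) : T.wt a + T.wt b ≤ T.wt p := by
  have hanc : ∀ u, u ∈ T.children p → T.Anc p u := by
    intro u hu
    simp only [children, Finset.mem_filter, Finset.mem_univ, true_and] at hu
    exact ⟨1, hu.1⟩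
  have hdisj : Disjoint (Finset.univ.filter fun x => T.Anc a x)
      (Finset.univ.filter fun x => T.Anc b x) := by
    rw [Finset.disjoint_left]
    intro x hxa hxb
    simp only [Finset.mem_filter, Finset.mem_univ, true_and] at hxa hxb
    have hd : T.depth a = T.depth b := by
      rw [T.depth_child ha, T.depth_child hb]
    rcases T.anc_comparable hxa hxb with h | h
    · exact hne (T.eq_of_anc_depth h hd)
    · exact hne (T.eq_of_anc_depth h hd.symm).symm
  have hsub : (Finset.univ.filter fun x => T.Anc a x) ∪
      (Finset.univ.filter fun x => T.Anc b x) ⊆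
      (Finset.univ.filter fun x => T.Anc p x) := by
    intro x hx
    simp only [Finset.mem_union, Finset.mem_filter, Finset.mem_univ, true_and] at hx ⊢
    rcases hx with h | h
    · exact T.anc_trans (hanc a ha) h
    · exact T.anc_trans (hanc b hb) h
  calc T.wt a + T.wt b =
      ((Finset.univ.filter fun x => T.Anc a x) ∪
        (Finset.univ.filter fun x => T.Anc b x)).card :=
        (Finset.card_union_of_disjoint hdisj).symm
    _ ≤ T.wt p := Finset.card_le_card hsub

/-- The top vertex of the heavy-path segment through the edge below `v`. -/
def top (T : FinTree) (v : T.V) : T.V :=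
  if T.parent v = T.root ∨ v ≠ T.heavy (T.parent v) then v
  else T.top (T.parent v)
termination_by T.depth v
decreasing_by
  rename_i h
  push_neg at h
  have hv : v ≠ T.root := by
    intro hr
    exact h.1 (by rw [hr, T.parent_root])
  have := T.depth_parent hv
  omega

lemma top_else {v : T.V} (h : ¬(T.parent v = T.root ∨ v ≠ T.heavy (T.parent v))) :
    T.top v = T.top (T.parent v) := by
  rw [top, if_neg h]

lemma top_if {v : T.V} (h : T.parent v = T.root ∨ v ≠ T.heavy (T.parent v)) :
    T.top v = v := by
  rw [top, if_pos h]

lemma top_anc (v : T.V) : T.Anc (T.top v) v := by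
  have H : ∀ n v, T.depth v ≤ n → T.Anc (T.top v) v := by
    intro n
    induction n with
    | zero =>
      intro v hv
      have hr : v = T.root := T.eq_root_of_depth_eq_zero (Nat.le_zero.mp hv)
      subst hr
      rw [T.top_if (Or.inl T.parent_root)]
      exact T.anc_refl _
    | succ n ih =>
      intro v hv
      by_cases h : T.parent v = T.root ∨ v ≠ T.heavy (T.parent v)
      · rw [T.top_if h]; exact T.anc_refl v
      · rw [T.top_else h]
        push_neg at h
        have hvr : v ≠ T.root := by
          intro hr; exact h.1 (by rw [hr, T.parent_root])
        have hd := T.depth_parent hvr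
        exact T.anc_trans (ih (T.parent v) (by omega)) (T.anc_parent v)
  exact H _ v le_rfl

lemma top_idem (v : T.V) : T.top (T.top v) = T.top v := by
  have H : ∀ n v, T.depth v ≤ n → T.top (T.top v) = T.top v := by
    intro n
    induction n with
    | zero =>
      intro v hv
      have hr : v = T.root := T.eq_root_of_depth_eq_zero (Nat.le_zero.mp hv)
      subst hr
      have h : T.top T.root = T.root := T.top_if (Or.inl T.parent_root)
      rw [h]
      exact h
    | succ n ih =>
      intro v hv
      by_cases h : T.parent v = T.root ∨ v ≠ T.heavy (T.parent v)
      · rw [T.top_if h]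
        exact T.top_if h
      · rw [T.top_else h]
        push_neg at h
        have hvr : v ≠ T.root := by
          intro hr; exact h.1 (by rw [hr, T.parent_root])
        have hd := T.depth_parent hvr
        exact ih (T.parent v) (by omega)
  exact H _ v le_rfl

lemma top_up {t v w : T.V} (hv : T.top v = t) (hw : T.Anc w v) (htw : T.Anc t w) :
    T.top w = t := by
  obtain ⟨n, hn⟩ := hw
  induction n generalizing v with
  | zero => rw [← hn]; exact hv
  | succ n ih =>
    by_cases hvt : v = t
    · have hwv : T.Anc w v := ⟨n + 1, hn⟩
      have htv : T.Anc v w := by rw [hvt]; exact htw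
      have hwt : w = v := T.anc_antisymm hwv htv
      rw [hwt]
      exact hv
    · by_cases h : T.parent v = T.root ∨ v ≠ T.heavy (T.parent v)
      · exact absurd (T.top_if h ▸ hv) hvt
      · have hpv : T.top (T.parent v) = t := by rw [← T.top_else h, hv]
        exact ih hpv (by rw [← Function.iterate_succ_apply, hn])

lemma top_depth_unique {a b t : T.V} (ha : T.top a = t) (hb : T.top b = t)
    (hd : T.depth a = T.depth b) : a = b := by
  have H : ∀ n a b, T.depth a ≤ n → T.top a = t → T.top b = t →
      T.depth a = T.depth b → a = b := by
    intro n
    induction n with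
    | zero =>
      intro a b hle ha hb hd
      have har : a = T.root := T.eq_root_of_depth_eq_zero (Nat.le_zero.mp hle)
      have hbr : b = T.root := T.eq_root_of_depth_eq_zero (by omega)
      rw [har, hbr]
    | succ n ih =>
      intro a b hle ha hb hd
      by_cases hat : a = t
      · have htb : T.Anc a b := by
          rw [hat]; exact hb ▸ T.top_anc b
        exact T.eq_of_anc_depth htb hd
      · by_cases hbt : b = t
        · have hta : T.Anc b a := by
            rw [hbt]; exact ha ▸ T.top_anc a
          exact (T.eq_of_anc_depth hta hd.symm).symm
        · have hca : ¬(T.parent a = T.root ∨ a ≠ T.heavy (T.parent a)) := by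
            intro h; exact hat (T.top_if h ▸ ha)
          have hcb : ¬(T.parent b = T.root ∨ b ≠ T.heavy (T.parent b)) := by
            intro h; exact hbt (T.top_if h ▸ hb)
          have hpa : T.top (T.parent a) = t := by rw [← T.top_else hca, ha]
          have hpb : T.top (T.parent b) = t := by rw [← T.top_else hcb, hb]
          push_neg at hca hcb
          have har : a ≠ T.root := by
            intro hr; exact hca.1 (by rw [hr, T.parent_root])
          have hbr : b ≠ T.root := by
            intro hr; exact hcb.1 (by rw [hr, T.parent_root])
          have hda := T.depth_parent har
          have hdb := T.depth_parent hbr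
          have hpp : T.parent a = T.parent b :=
            ih (T.parent a) (T.parent b) (by omega) hpa hpb (by omega)
          have hha := hca.2
          have hhb := hcb.2
          rw [hha, hhb, hpp]
  exact H (T.depth a) a b le_rfl ha hb hd

lemma anc_of_top_eq_aux {u v : T.V} (hd : T.depth u ≤ T.depth v)
    (h : T.top u = T.top v) : T.Anc u v := by
  set t := T.top v with ht
  set k := T.depth v - T.depth u with hk
  set w := T.parent^[k] v with hw
  have hwv : T.Anc w v := ⟨k, rfl⟩
  have hkd : k ≤ T.depth v := by omega
  have hdw : T.depth w = T.depth u := by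
    rw [hw, T.depth_iterate hkd]; omega
  have htv : T.Anc t v := by rw [ht]; exact T.top_anc v
  have htu : T.Anc t u := by rw [← h]; exact T.top_anc u
  have hdt : T.depth t ≤ T.depth u := T.depth_le_of_anc htu
  have htw : T.Anc t w := by
    rcases T.anc_comparable htv hwv with hc | hc
    · exact hc
    · have : T.depth w ≤ T.depth t := T.depth_le_of_anc hc
      have : w = t := T.eq_of_anc_depth hc (by omega)
      rw [this]; exact T.anc_refl t
  have hwt : T.top w = t := T.top_up ht.symm hwv htw
  have hut : T.top u = t := h
  have hwu : w = u := T.top_depth_unique hwt hut hdw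
  rw [← hwu]
  exact hwv

lemma anc_of_top_eq {u v : T.V} (h : T.top u = T.top v) :
    T.Anc u v ∨ T.Anc v u := by
  rcases le_total (T.depth u) (T.depth v) with hd | hd
  · exact Or.inl (T.anc_of_top_eq_aux hd h)
  · exact Or.inr (T.anc_of_top_eq_aux hd h.symm)

/-- The heavy-path coloring. -/
def chi (v : T.V) : ℕ := (Fintype.equivFin T.V (T.top v) : ℕ)

lemma top_eq_of_chi_eq {u v : T.V} (h : T.chi u = T.chi v) : T.top u = T.top v :=
  (Fintype.equivFin T.V).injective (Fin.val_injective h)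

lemma chi_isMonotone : T.IsMonotone T.chi := by
  intro u v hu hv hc
  have ht : T.top u = T.top v := T.top_eq_of_chi_eq hc
  refine ⟨T.anc_of_top_eq ht, ?_⟩
  intro w hw huw hwv
  have htw : T.Anc (T.top u) w := T.anc_trans (T.top_anc u) huw
  have : T.top w = T.top u := T.top_up ht.symm hwv htw
  show T.chi w = T.chi u
  rw [chi, chi, this]

/-- The number of light edges on the path from the root to `v`. -/
def lcount (v : T.V) : ℕ :=
  ((T.pathToRoot v).filter fun u => u ≠ T.heavy (T.parent u)).card

lemma lcount_root : T.lcount T.root = 0 := by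
  rw [lcount, T.pathToRoot_root]; rfl

lemma self_mem_children {v : T.V} (hv : v ≠ T.root) :
    v ∈ T.children (T.parent v) := by
  rw [children, Finset.mem_filter]
  refine ⟨Finset.mem_univ v, rfl, ?_⟩
  intro hvp
  have := T.depth_parent hv
  rw [← hvp] at this
  omega

lemma lcount_heavy {v : T.V} (hv : v ≠ T.root) (hh : v = T.heavy (T.parent v)) :
    T.lcount v = T.lcount (T.parent v) := by
  rw [lcount, lcount, T.pathToRoot_eq hv, Finset.filter_insert, if_neg (by simp [← hh])]

lemma lcount_light {v : T.V} (hv : v ≠ T.root) (hh : v ≠ T.heavy (T.parent v)) :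
    T.lcount v = T.lcount (T.parent v) + 1 := by
  rw [lcount, lcount, T.pathToRoot_eq hv, Finset.filter_insert, if_pos hh]
  rw [Finset.card_insert_of_notMem]
  intro hmem
  exact T.notMem_parent_path hv (Finset.mem_of_mem_filter v hmem)

lemma wt_mul_le (v : T.V) : T.wt v * 2 ^ T.lcount v ≤ Fintype.card T.V := by
  have H : ∀ n v, T.depth v ≤ n → T.wt v * 2 ^ T.lcount v ≤ Fintype.card T.V := by
    intro n
    induction n with
    | zero =>
      intro v hle
      have hr : v = T.root := T.eq_root_of_depth_eq_zero (Nat.le_zero.mp hle)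
      rw [hr, T.lcount_root, T.wt_root, pow_zero, mul_one]
    | succ n ih =>
      intro v hle
      by_cases hv : v = T.root
      · rw [hv, T.lcount_root, T.wt_root, pow_zero, mul_one]
      · have hd := T.depth_parent hv
        have hihp := ih (T.parent v) (by omega)
        by_cases hh : v = T.heavy (T.parent v)
        · rw [T.lcount_heavy hv hh]
          calc T.wt v * 2 ^ T.lcount (T.parent v)
              ≤ T.wt (T.parent v) * 2 ^ T.lcount (T.parent v) :=
                Nat.mul_le_mul_right _ (T.wt_le_of_anc (T.anc_parent v))
            _ ≤ Fintype.card T.V := hihp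
        · rw [T.lcount_light hv hh]
          have hvc : v ∈ T.children (T.parent v) := T.self_mem_children hv
          have hne : (T.children (T.parent v)).Nonempty := ⟨v, hvc⟩
          have h1 : T.wt v ≤ T.wt (T.heavy (T.parent v)) := T.wt_le_heavy hne hvc
          have h2 : T.wt v + T.wt (T.heavy (T.parent v)) ≤ T.wt (T.parent v) :=
            T.children_wt_add hvc (T.heavy_mem hne) hh
          have h3 : 2 * T.wt v ≤ T.wt (T.parent v) := by omega
          calc T.wt v * 2 ^ (T.lcount (T.parent v) + 1)
              = 2 * T.wt v * 2 ^ T.lcount (T.parent v) := by ring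
            _ ≤ T.wt (T.parent v) * 2 ^ T.lcount (T.parent v) :=
                Nat.mul_le_mul_right _ h3
            _ ≤ Fintype.card T.V := hihp
  exact H _ v le_rfl

lemma colors_le (v : T.V) (hv : v ≠ T.root) :
    ((T.pathToRoot v).image T.chi).card ≤ 1 + T.lcount v := by
  have H : ∀ n v, T.depth v ≤ n → v ≠ T.root →
      ((T.pathToRoot v).image T.chi).card ≤ 1 + T.lcount v := by
    intro n
    induction n with
    | zero =>
      intro v hle hv
      exact absurd (T.eq_root_of_depth_eq_zero (Nat.le_zero.mp hle)) hv
    | succ n ih =>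
      intro v hle hv
      have hd := T.depth_parent hv
      rw [T.pathToRoot_eq hv, Finset.image_insert]
      by_cases hp : T.parent v = T.root
      · rw [hp, T.pathToRoot_root]
        simp
      · by_cases hh : v = T.heavy (T.parent v)
        · have hcc : T.chi v = T.chi (T.parent v) := by
            rw [chi, chi, T.top_else (by push_neg; exact ⟨hp, hh⟩)]
          have hmem : T.chi v ∈ (T.pathToRoot (T.parent v)).image T.chi := by
            rw [hcc]
            exact Finset.mem_image_of_mem T.chi
              (T.mem_pathToRoot.mpr ⟨hp, T.anc_refl _⟩)
          rw [Finset.insert_eq_self.mpr hmem, T.lcount_heavy hv hh]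
          exact ih (T.parent v) (by omega) hp
        · rw [T.lcount_light hv hh]
          calc (insert (T.chi v) ((T.pathToRoot (T.parent v)).image T.chi)).card
              ≤ ((T.pathToRoot (T.parent v)).image T.chi).card + 1 :=
                Finset.card_insert_le _ _
            _ ≤ 1 + T.lcount (T.parent v) + 1 := by
                have := ih (T.parent v) (by omega) hp
                omega
            _ = 1 + (T.lcount (T.parent v) + 1) := by omega
  exact H _ v le_rfl hv

end FinTree

/-- Every connected rooted tree on `n ≥ 2` vertices admits a monotone coloring
with at most `1 + log₂ n` colors on every root-leaf path; in particular
`M(χ) ≤ 1 + log₂ n`. -/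
theorem exists_monotone_coloring (T : FinTree) (hn : 2 ≤ Fintype.card T.V) :
    ∃ χ : T.V → ℕ, T.IsMonotone χ ∧
      (∀ v : T.V, (((T.pathToRoot v).image χ).card : ℝ) ≤
        1 + Real.logb 2 (Fintype.card T.V)) ∧
      (T.mult χ : ℝ) ≤ 1 + Real.logb 2 (Fintype.card T.V) := by
  refine ⟨T.chi, T.chi_isMonotone, ?_, ?_⟩
  · intro v
    by_cases hv : v = T.root
    · rw [hv, T.pathToRoot_root]
      simp only [Finset.image_empty, Finset.card_empty, Nat.cast_zero]
      have : (0 : ℝ) ≤ Real.logb 2 (Fintype.card T.V) :=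
        Real.logb_nonneg (by norm_num) (by exact_mod_cast Nat.one_le_of_lt hn)
      linarith
    · have h1 : ((T.pathToRoot v).image T.chi).card ≤ 1 + T.lcount v :=
        T.colors_le v hv
      have h2 : 2 ^ T.lcount v ≤ Fintype.card T.V := by
        have := T.wt_mul_le v
        have := T.wt_pos v
        nlinarith [T.wt_mul_le v, T.wt_pos v]
      have h3 : (T.lcount v : ℝ) ≤ Real.logb 2 (Fintype.card T.V) := by
        rw [Real.le_logb_iff_rpow_le (by norm_num)
          (by positivity : (0:ℝ) < (Fintype.card T.V : ℝ))]
        rw [Real.rpow_natCast]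
        exact_mod_cast h2
      calc (((T.pathToRoot v).image T.chi).card : ℝ)
          ≤ 1 + (T.lcount v : ℝ) := by exact_mod_cast h1
        _ ≤ 1 + Real.logb 2 (Fintype.card T.V) := by linarith
  · have hne : (Finset.univ : Finset T.V).Nonempty := by
      have : 0 < Fintype.card T.V := by omega
      exact Finset.univ_nonempty_iff.mpr (Fintype.card_pos_iff.mp this)
    obtain ⟨v, -, hv⟩ := Finset.exists_mem_eq_sup Finset.univ hne
      (fun v : T.V => ((T.pathToRoot v).image T.chi).card)
    rw [FinTree.mult, hv]
    by_cases hvr : v = T.root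
    · rw [hvr, T.pathToRoot_root]
      simp only [Finset.image_empty, Finset.card_empty, Nat.cast_zero]
      have : (0 : ℝ) ≤ Real.logb 2 (Fintype.card T.V) :=
        Real.logb_nonneg (by norm_num) (by exact_mod_cast Nat.one_le_of_lt hn)
      linarith
    · have h1 : ((T.pathToRoot v).image T.chi).card ≤ 1 + T.lcount v :=
        T.colors_le v hvr
      have h2 : 2 ^ T.lcount v ≤ Fintype.card T.V := by
        nlinarith [T.wt_mul_le v, T.wt_pos v]
      have h3 : (T.lcount v : ℝ) ≤ Real.logb 2 (Fintype.card T.V) := by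
        rw [Real.le_logb_iff_rpow_le (by norm_num)
          (by positivity : (0:ℝ) < (Fintype.card T.V : ℝ))]
        rw [Real.rpow_natCast]
        exact_mod_cast h2
      calc (((T.pathToRoot v).image T.chi).card : ℝ)
          ≤ 1 + (T.lcount v : ℝ) := by exact_mod_cast h1
        _ ≤ 1 + Real.logb 2 (Fintype.card T.V) := by linarith

end
end

section
/- For every ε ∈ (0,1) the following holds. Let (X,d) be a metric space and let f_i : X → [0,1] (i ∈ ℤ) be functions such that Σ_{i∈ℤ} 2^i·|f_i(x) − f_i(y)| < ∞ for all x,y ∈ X. Then there is a map F : X → ℝ^{2+⌈log₂(1/ε)⌉} with the ℓ₁ norm such that for all x,y ∈ X: (1−ε)·Σ_{i∈ℤ} 2^i·|f_i(x)−f_i(y)| − 2·ζ(x,y) ≤ ‖F(x)−F(y)‖₁ ≤ Σ_{i∈ℤ} 2^i·|f_i(x)−f_i(y)|. -/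
/-!
Let `m = 2 + ⌈log₂(1/ε)⌉`, so that `4 ≤ ε 2^m`, and let the `l`-th coordinate of `F(z)` be the
sum of `2^i (f_i(z) − f_i(x₀))` over `i ≡ l (mod m)`; the upper bound is the triangle inequality.
For the lower bound fix `x, y`, put `a_i = 2^i d_i` with `d_i = f_i(x) − f_i(y)`, and look at one
residue class, in which any two scales are at least `m` apart. For every index `I` of the class,
`Σ |a_i| ≤ |Σ a_i| + 2 Σ_{i ≠ I} |a_i|`. A term with `|d_i| < 1` preceded by a nonzero term is
paid for by `ζ`, since then `|d_i|` is its own fractional part. Every other nonzero term has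
`|d_i| = 1`, except the lowest nonzero index overall. If some term with `|d_i| = 1` is preceded
by a nonzero term, let `I` be the largest such index: all other unpaid terms lie at scales at most
`I − m` and weigh at most `2^(I−m+1) ≤ ε 2^I / 2`, a fraction `ε / 2` of the class total.
Otherwise let `I` be the lowest nonzero index, and no other term is left unpaid.
-/

open scoped Classical

theorem abs_tsum_le_tsum_abs {ι : Type*} {a : ι → ℝ} (ha : Summable fun i => |a i|) :
    |∑' i, a i| ≤ ∑' i, |a i| := by
  simpa only [Real.norm_eq_abs] using
    norm_tsum_le_tsum_norm (f := a) (by simpa only [Real.norm_eq_abs] using ha)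

theorem tsum_abs_le_abs_tsum_add_two_mul {ι : Type*} [DecidableEq ι] {a : ι → ℝ}
    (ha : Summable fun i => |a i|) (I : ι) :
    ∑' i, |a i| ≤ |∑' i, a i| + 2 * ∑' i, if i = I then 0 else |a i| := by
  have hrest : |∑' i, if i = I then 0 else a i| ≤ ∑' i, if i = I then 0 else |a i| := by
    have h := abs_tsum_le_tsum_abs (a := fun i => if i = I then 0 else a i)
      (ha.of_nonneg_of_le (fun _ => abs_nonneg _) fun i => by split_ifs <;> simp)
    simpa only [apply_ite, abs_zero] using h
  rw [ha.tsum_eq_add_tsum_ite I, ha.of_abs.tsum_eq_add_tsum_ite I]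
  have := abs_sub (a I + ∑' i, if i = I then 0 else a i) (∑' i, if i = I then 0 else a i)
  rw [add_sub_cancel_right] at this
  linarith

theorem hasSum_ite_le_zpow_two (J : ℤ) :
    HasSum (fun i : ℤ => if i ≤ J then (2 : ℝ) ^ i else 0) (2 ^ (J + 1)) := by
  have hinj : Function.Injective fun k : ℕ => J - k := fun p q h => by simpa using h
  rw [← hinj.hasSum_iff fun i hi => if_neg fun hiJ => hi ⟨(J - i).toNat, by simp; omega⟩]
  convert hasSum_geometric_two' ((2 : ℝ) ^ (J + 1)) using 1
  funext k
  simp only [Function.comp_apply, sub_le_self_iff, Nat.cast_nonneg, if_true]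
  rw [div_div, ← pow_succ', ← zpow_natCast, ← zpow_sub₀ two_ne_zero]
  congr 1
  push_cast
  ring

theorem bddAbove_setOf_zpow_two_le (S : ℝ) : BddAbove {i : ℤ | (2 : ℝ) ^ i ≤ S} := by
  obtain ⟨n, hn⟩ := pow_unbounded_of_one_lt S one_lt_two
  refine ⟨n, fun i hi => ?_⟩
  have : (2 : ℝ) ^ i < 2 ^ (n : ℤ) := by rw [zpow_natCast]; exact hi.out.trans_lt hn
  exact ((zpow_lt_zpow_iff_right₀ one_lt_two).mp this).le

theorem Set.indicator_apply_comp_of_zero {ι α β : Type*} [Zero α] [Zero β] {s : Set ι}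
    {d : ι → α} {h : ι → α → β} (h0 : ∀ i, h i 0 = 0) (i : ι) :
    h i (s.indicator d i) = s.indicator (fun i => h i (d i)) i := by
  by_cases hi : i ∈ s <;> simp [hi, h0]

theorem sum_tsum_indicator_fiber {ι κ α : Type*} [Fintype κ] [AddCommGroup α] [UniformSpace α]
    [IsUniformAddGroup α] [CompleteSpace α] [T2Space α] (c : ι → κ) {g : ι → α}
    (hg : Summable g) :
    ∑ l, ∑' i, {i | c i = l}.indicator g i = ∑' i, g i := by
  rw [← Summable.tsum_finsetSum fun l _ => hg.indicator _]
  refine tsum_congr fun i => ?_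
  simp [Set.indicator_apply]

theorem sum_abs_tsum_indicator_fiber_le {ι κ : Type*} [Fintype κ] (c : ι → κ) {g : ι → ℝ}
    (hg : Summable fun i => |g i|) :
    ∑ l, |∑' i, {i | c i = l}.indicator g i| ≤ ∑' i, |g i| := by
  rw [← sum_tsum_indicator_fiber c hg]
  refine Finset.sum_le_sum fun l _ => ?_
  have habs := Set.indicator_apply_comp_of_zero (s := {i | c i = l}) (d := g)
    (h := fun _ t => |t|) fun _ => abs_zero
  refine (abs_tsum_le_tsum_abs ?_).trans_eq (tsum_congr habs)
  simpa only [habs] using hg.indicator {i | c i = l}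

theorem Int.add_le_of_divModEquiv_snd_eq {m : ℕ} [NeZero m] {i j : ℤ}
    (h : (Int.divModEquiv m i).2 = (Int.divModEquiv m j).2) (hij : i < j) : i + m ≤ j := by
  have hi := (Int.divModEquiv m).symm_apply_apply i
  have hj := (Int.divModEquiv m).symm_apply_apply j
  rw [Int.divModEquiv_symm_apply] at hi hj
  rw [h] at hi
  simp only [Int.divModEquiv_apply] at hi hj
  have hm : (0 : ℤ) < m := by exact_mod_cast Nat.pos_of_neZero m
  have hq : i / m < j / m := by nlinarith
  nlinarith

theorem one_le_mul_two_pow_ceil_logb {ε : ℝ} (hε : 0 < ε) :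
    1 ≤ ε * 2 ^ ⌈Real.logb 2 (1 / ε)⌉₊ := by
  have h := (Real.logb_le_iff_le_rpow one_lt_two (one_div_pos.mpr hε)).mp
    (Nat.le_ceil (Real.logb 2 (1 / ε)))
  rw [Real.rpow_natCast] at h
  rwa [div_le_iff₀ hε, mul_comm] at h

theorem Summable.ite_zpow_mul_fract_abs {e : ℤ → ℝ}
    (hs : Summable fun i => (2 : ℝ) ^ i * |e i|) (p : ℤ → Prop) [DecidablePred p] :
    Summable fun i => if p i then (2 : ℝ) ^ i * Int.fract |e i| else 0 :=
  hs.of_nonneg_of_le (fun i => by positivity) fun i => by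
    have : Int.fract |e i| ≤ |e i| := by
      rw [← Int.self_sub_floor]
      linarith [Int.cast_nonneg (R := ℝ) (Int.floor_nonneg.mpr (abs_nonneg (e i)))]
    split_ifs
    exacts [by gcongr, by positivity]

section SeparatedScales

variable {ε : ℝ} {m : ℕ} {e : ℤ → ℝ} {cond : ℤ → Prop}

theorem zpow_mul_abs_le_of_ne_greatest (he : ∀ i, |e i| ≤ 1)
    (hsep : ∀ i j, e i ≠ 0 → e j ≠ 0 → i < j → i + m ≤ j)
    (hcond : ∀ i j, j < i → e j ≠ 0 → cond i) {I : ℤ} (hI : e I ≠ 0)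
    (hImax : ∀ i, cond i → |e i| = 1 → i ≤ I) {i : ℤ} (hi : i ≠ I) :
    (2 : ℝ) ^ i * |e i| ≤
      (if cond i then 2 ^ i * Int.fract |e i| else 0) + if i ≤ I - m then 2 ^ i else 0 := by
  have hw : 0 ≤ if cond i then (2 : ℝ) ^ i * Int.fract |e i| else 0 := by positivity
  by_cases h0 : e i = 0
  · simp only [h0, abs_zero, mul_zero]
    positivity
  by_cases hQ : cond i ∧ |e i| < 1
  · rw [if_pos hQ.1, Int.fract_eq_self.mpr ⟨abs_nonneg _, hQ.2⟩]
    have hg : 0 ≤ if i ≤ I - m then (2 : ℝ) ^ i else 0 := by positivity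
    linarith
  have hlt : i < I := by
    refine lt_of_le_of_ne ?_ hi
    by_contra! hIi
    have hc : cond i := hcond i I hIi hI
    exact (hImax i hc (le_antisymm (he i) (not_lt.mp fun h => hQ ⟨hc, h⟩))).not_gt hIi
  have hiI : i ≤ I - m := by linarith [hsep i I h0 hI hlt]
  rw [if_pos hiI]
  have := mul_le_of_le_one_right (zpow_nonneg zero_le_two i) (he i)
  linarith

theorem exists_eq_of_ne_zero_of_not_cond (hcond : ∀ i j, j < i → e j ≠ 0 → cond i) :
    ∃ I, ∀ i, e i ≠ 0 → ¬cond i → i = I := by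
  by_cases h : ∃ I, e I ≠ 0 ∧ ¬cond I
  · obtain ⟨I, hI, hIc⟩ := h
    refine ⟨I, fun i hi hic => ?_⟩
    rcases lt_trichotomy i I with hiI | hiI | hiI
    · exact absurd (hcond I i hiI hi) hIc
    · exact hiI
    · exact absurd (hcond i I hiI hI) hic
  · push Not at h
    exact ⟨0, fun i hi hic => absurd (h i hi) hic⟩

theorem zpow_mul_abs_le_of_ne_first (hlt : ∀ i, cond i → |e i| < 1) {I : ℤ}
    (hI : ∀ i, e i ≠ 0 → ¬cond i → i = I) {i : ℤ} (hi : i ≠ I) :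
    (2 : ℝ) ^ i * |e i| ≤ if cond i then 2 ^ i * Int.fract |e i| else 0 := by
  by_cases hc : cond i
  · rw [if_pos hc, Int.fract_eq_self.mpr ⟨abs_nonneg _, hlt i hc⟩]
  · have : e i = 0 := by_contra fun h0 => hi (hI i h0 hc)
    simp [this, hc]

theorem Summable.ite_eq_zero_zpow_mul_abs (hs : Summable fun i => (2 : ℝ) ^ i * |e i|) (I : ℤ) :
    Summable fun i => if i = I then 0 else (2 : ℝ) ^ i * |e i| :=
  hs.of_nonneg_of_le (fun i => by positivity) fun i => by
    split_ifs
    exacts [by positivity, le_rfl]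

theorem exists_tsum_ite_ne_le_of_exists_abs_eq_one (hm : 4 ≤ ε * 2 ^ m)
    (he : ∀ i, |e i| ≤ 1) (hsep : ∀ i j, e i ≠ 0 → e j ≠ 0 → i < j → i + m ≤ j)
    (hcond : ∀ i j, j < i → e j ≠ 0 → cond i) (hs : Summable fun i => (2 : ℝ) ^ i * |e i|)
    (hB : ∃ i, cond i ∧ |e i| = 1) :
    ∃ I, ∑' i, (if i = I then 0 else (2 : ℝ) ^ i * |e i|) ≤
      (∑' i, if cond i then (2 : ℝ) ^ i * Int.fract |e i| else 0) +
        ε / 2 * ∑' i, (2 : ℝ) ^ i * |e i| := by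
  have hε : 0 ≤ ε := nonneg_of_mul_nonneg_left (by linarith) (by positivity)
  set S := ∑' i, (2 : ℝ) ^ i * |e i|
  set w : ℤ → ℝ := fun i => if cond i then 2 ^ i * Int.fract |e i| else 0
  have hw := hs.ite_zpow_mul_fract_abs cond
  have hle (i : ℤ) : (2 : ℝ) ^ i * |e i| ≤ S := hs.le_tsum i fun j _ => by positivity
  have hbdd : ∃ b, ∀ i, cond i ∧ |e i| = 1 → i ≤ b := by
    obtain ⟨b, hb⟩ := bddAbove_setOf_zpow_two_le S
    exact ⟨b, fun i hi => hb (by simpa [hi.2] using hle i)⟩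
  obtain ⟨I, ⟨-, hI1⟩, hImax⟩ := Int.exists_greatest_of_bdd hbdd hB
  have hI0 : e I ≠ 0 := fun h => by simp [h] at hI1
  have hgeo := hasSum_ite_le_zpow_two (I - m)
  have hIS : (2 : ℝ) ^ I ≤ S := by simpa [hI1] using hle I
  have hpow : (2 : ℝ) ^ I = 2 ^ m * 2 ^ (I - m) := by
    rw [← zpow_natCast, ← zpow_add₀ two_ne_zero, add_sub_cancel]
  refine ⟨I, ?_⟩
  calc ∑' i, (if i = I then 0 else (2 : ℝ) ^ i * |e i|)
      ≤ ∑' i, (w i + if i ≤ I - m then (2 : ℝ) ^ i else 0) := by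
        refine (hs.ite_eq_zero_zpow_mul_abs I).tsum_le_tsum (fun i => ?_) (hw.add hgeo.summable)
        rcases eq_or_ne i I with rfl | hi
        · rw [if_pos rfl]
          exact add_nonneg (by positivity) (by positivity)
        · rw [if_neg hi]
          exact zpow_mul_abs_le_of_ne_greatest he hsep hcond hI0
            (fun i hc h1 => hImax i ⟨hc, h1⟩) hi
    _ = ∑' i, w i + 2 * 2 ^ (I - m) := by
        rw [hw.tsum_add hgeo.summable, hgeo.tsum_eq, zpow_add_one₀ two_ne_zero, mul_comm]
    _ ≤ ∑' i, w i + ε / 2 * S := by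
        nlinarith [zpow_pos (two_pos : (0 : ℝ) < 2) (I - m)]

theorem exists_tsum_ite_ne_le_of_forall_abs_ne_one (he : ∀ i, |e i| ≤ 1)
    (hcond : ∀ i j, j < i → e j ≠ 0 → cond i) (hs : Summable fun i => (2 : ℝ) ^ i * |e i|)
    (hB : ∀ i, cond i → |e i| ≠ 1) :
    ∃ I, ∑' i, (if i = I then 0 else (2 : ℝ) ^ i * |e i|) ≤
      ∑' i, if cond i then (2 : ℝ) ^ i * Int.fract |e i| else 0 := by
  obtain ⟨I, hI⟩ := exists_eq_of_ne_zero_of_not_cond hcond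
  refine ⟨I, (hs.ite_eq_zero_zpow_mul_abs I).tsum_le_tsum (fun i => ?_)
    (hs.ite_zpow_mul_fract_abs cond)⟩
  rcases eq_or_ne i I with rfl | hi
  · rw [if_pos rfl]
    positivity
  · rw [if_neg hi]
    exact zpow_mul_abs_le_of_ne_first (fun i hc => (he i).lt_of_ne (hB i hc)) hI hi

theorem one_sub_mul_tsum_le_of_separated (hm : 4 ≤ ε * 2 ^ m) (he : ∀ i, |e i| ≤ 1)
    (hsep : ∀ i j, e i ≠ 0 → e j ≠ 0 → i < j → i + m ≤ j)
    (hcond : ∀ i j, j < i → e j ≠ 0 → cond i) (hs : Summable fun i => (2 : ℝ) ^ i * |e i|) :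
    (1 - ε) * ∑' i, (2 : ℝ) ^ i * |e i| ≤
      |∑' i, (2 : ℝ) ^ i * e i| + 2 * ∑' i, if cond i then 2 ^ i * Int.fract |e i| else 0 := by
  have hε : 0 ≤ ε := nonneg_of_mul_nonneg_left (by linarith) (by positivity)
  obtain ⟨I, hI⟩ : ∃ I, ∑' i, (if i = I then 0 else (2 : ℝ) ^ i * |e i|) ≤
      (∑' i, if cond i then (2 : ℝ) ^ i * Int.fract |e i| else 0) +
        ε / 2 * ∑' i, (2 : ℝ) ^ i * |e i| := by
    by_cases hB : ∃ i, cond i ∧ |e i| = 1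
    · exact exists_tsum_ite_ne_le_of_exists_abs_eq_one hm he hsep hcond hs hB
    · push Not at hB
      obtain ⟨I, hI⟩ := exists_tsum_ite_ne_le_of_forall_abs_ne_one he hcond hs hB
      exact ⟨I, hI.trans (le_add_of_nonneg_right (by positivity))⟩
  have h := tsum_abs_le_abs_tsum_add_two_mul (a := fun i => (2 : ℝ) ^ i * e i)
    (by simpa only [abs_mul, abs_zpow, abs_two] using hs) I
  simp only [abs_mul, abs_zpow, abs_two] at h
  linarith

theorem one_sub_mul_tsum_sub_le_sum_abs_tsum_indicator_fiber {κ : Type*} [Fintype κ]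
    (hm : 4 ≤ ε * 2 ^ m) (c : ℤ → κ) (hc : ∀ i j, c i = c j → i < j → i + m ≤ j)
    {d : ℤ → ℝ} (hd : ∀ i, |d i| ≤ 1) (hs : Summable fun i => (2 : ℝ) ^ i * |d i|) :
    (1 - ε) * ∑' i, (2 : ℝ) ^ i * |d i| -
        2 * ∑' i, (if ∃ j : ℤ, j < i ∧ d j ≠ 0 then (2 : ℝ) ^ i * Int.fract |d i| else 0) ≤
      ∑ l, |∑' i, {i | c i = l}.indicator (fun i => (2 : ℝ) ^ i * d i) i| := by
  set cond : ℤ → Prop := fun i => ∃ j : ℤ, j < i ∧ d j ≠ 0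
  have hclass (l : κ) :
      (1 - ε) * ∑' i, {i | c i = l}.indicator (fun i => (2 : ℝ) ^ i * |d i|) i ≤
        |∑' i, {i | c i = l}.indicator (fun i => (2 : ℝ) ^ i * d i) i| +
          2 * ∑' i, {i | c i = l}.indicator
            (fun i => if cond i then (2 : ℝ) ^ i * Int.fract |d i| else 0) i := by
    set C := {i | c i = l}
    have habs := Set.indicator_apply_comp_of_zero (s := C) (d := d)
      (h := fun i t => (2 : ℝ) ^ i * |t|) fun _ => by simp
    have hsum := Set.indicator_apply_comp_of_zero (s := C) (d := d)
      (h := fun i t => (2 : ℝ) ^ i * t) fun _ => mul_zero _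
    have hfract := Set.indicator_apply_comp_of_zero (s := C) (d := d)
      (h := fun i t => if cond i then (2 : ℝ) ^ i * Int.fract |t| else 0) fun _ => by simp
    simp only [← habs, ← hsum, ← hfract]
    refine one_sub_mul_tsum_le_of_separated hm (fun i => ?_) (fun i j hi hj hij => ?_)
      (fun i j hji hj => ⟨j, hji, fun h => hj (by simp [h])⟩) ?_
    · rw [Set.indicator_apply]
      split_ifs
      exacts [hd i, by simp]
    · exact hc i j
        ((Set.mem_of_indicator_ne_zero hi).trans (Set.mem_of_indicator_ne_zero hj).symm) hij
    · simpa only [habs] using hs.indicator C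
  have := Finset.sum_le_sum fun l (_ : l ∈ Finset.univ) => hclass l
  rw [Finset.sum_add_distrib, ← Finset.mul_sum, ← Finset.mul_sum, sum_tsum_indicator_fiber c hs,
    sum_tsum_indicator_fiber c (hs.ite_zpow_mul_fract_abs cond)] at this
  linarith

end SeparatedScales

theorem multiscale_combination_general (ε : ℝ) (hε : 0 < ε)
    (X : Type) (f : ℤ → X → ℝ)
    (hf : ∀ (i : ℤ) (x : X), f i x ∈ Set.Icc (0 : ℝ) 1)
    (hsum : ∀ x y : X, Summable fun i : ℤ => (2 : ℝ) ^ i * |f i x - f i y|) :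
    ∃ F : X → Fin (2 + ⌈Real.logb 2 (1 / ε)⌉₊) → ℝ,
      ∀ x y : X,
        ((1 - ε) * (∑' i : ℤ, (2 : ℝ) ^ i * |f i x - f i y|) -
            2 * (∑' i : ℤ,
              if ∃ j : ℤ, j < i ∧ f j x - f j y ≠ 0 then
                (2 : ℝ) ^ i * (|f i x - f i y| - (⌊|f i x - f i y|⌋ : ℝ))
              else 0) ≤
          ∑ l, |F x l - F y l|) ∧
        ∑ l, |F x l - F y l| ≤ ∑' i : ℤ, (2 : ℝ) ^ i * |f i x - f i y| := by
  set m := 2 + ⌈Real.logb 2 (1 / ε)⌉₊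
  have hm : 4 ≤ ε * 2 ^ m := by
    have := one_le_mul_two_pow_ceil_logb hε
    rw [pow_add]
    linarith
  rcases isEmpty_or_nonempty X with hX | ⟨⟨x₀⟩⟩
  · exact ⟨fun _ _ => 0, fun x => isEmptyElim x⟩
  let c : ℤ → Fin m := fun i => (Int.divModEquiv m i).2
  have hsum' (x y : X) : Summable fun i : ℤ => (2 : ℝ) ^ i * (f i x - f i y) :=
    .of_abs (by simpa only [abs_mul, abs_zpow, abs_two] using hsum x y)
  refine ⟨fun z l => ∑' i, {i | c i = l}.indicator (fun i => (2 : ℝ) ^ i * (f i z - f i x₀)) i,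
    fun x y => ?_⟩
  have hdiff (l : Fin m) :
      (∑' i, {i | c i = l}.indicator (fun i => (2 : ℝ) ^ i * (f i x - f i x₀)) i) -
          ∑' i, {i | c i = l}.indicator (fun i => (2 : ℝ) ^ i * (f i y - f i x₀)) i =
        ∑' i, {i | c i = l}.indicator (fun i => (2 : ℝ) ^ i * (f i x - f i y)) i := by
    rw [← ((hsum' x x₀).indicator _).tsum_sub ((hsum' y x₀).indicator _)]
    refine tsum_congr fun i => ?_
    simp only [Set.indicator_apply]
    split_ifs <;> ring
  have hd (i : ℤ) : |f i x - f i y| ≤ 1 :=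
    abs_sub_le_of_nonneg_of_le (hf i x).1 (hf i x).2 (hf i y).1 (hf i y).2
  simp only [hdiff]
  exact ⟨one_sub_mul_tsum_sub_le_sum_abs_tsum_indicator_fiber hm c
      (fun i j hij => Int.add_le_of_divModEquiv_snd_eq hij) hd (hsum x y),
    by simpa only [abs_mul, abs_zpow, abs_two] using
      sum_abs_tsum_indicator_fiber_le c (g := fun i => (2 : ℝ) ^ i * (f i x - f i y))
        (by simpa only [abs_mul, abs_zpow, abs_two] using hsum x y)⟩

/-- Lemma 3.4: combining scales.  Given functions `f_i : X → [0,1]` with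
`Σ_i 2^i |f_i(x) − f_i(y)| < ∞`, there is a map `F` into `ℓ₁` of dimension
`2 + ⌈log₂(1/ε)⌉` with
`(1−ε)·Σ_i 2^i|f_i(x)−f_i(y)| − 2ζ(x,y) ≤ ‖F(x)−F(y)‖₁ ≤ Σ_i 2^i|f_i(x)−f_i(y)|`. -/
theorem multiscale_combination (ε : ℝ) (hε : 0 < ε) (hε1 : ε < 1)
    (X : Type) [MetricSpace X] (f : ℤ → X → ℝ)
    (hf : ∀ (i : ℤ) (x : X), f i x ∈ Set.Icc (0 : ℝ) 1)
    (hsum : ∀ x y : X, Summable fun i : ℤ => (2 : ℝ) ^ i * |f i x - f i y|) :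
    ∃ F : X → Fin (2 + ⌈Real.logb 2 (1 / ε)⌉₊) → ℝ,
      ∀ x y : X,
        ((1 - ε) * (∑' i : ℤ, (2 : ℝ) ^ i * |f i x - f i y|) -
            2 * (∑' i : ℤ,
              if ∃ j : ℤ, j < i ∧ f j x - f j y ≠ 0 then
                (2 : ℝ) ^ i * (|f i x - f i y| - (⌊|f i x - f i y|⌋ : ℝ))
              else 0) ≤
          ∑ l, |F x l - F y l|) ∧
        ∑ l, |F x l - F y l| ≤ ∑' i : ℤ, (2 : ℝ) ^ i * |f i x - f i y| :=
  multiscale_combination_general ε hε X f hf hsum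
end

section
/- For every ε ∈ (0,1) and m ∈ ℕ the following holds. Let (X,d) be a metric space and let f_i : X → [0,1]^m (i ∈ ℤ) be functions such that Σ_{i∈ℤ} 2^i·‖f_i(x) − f_i(y)‖₁ < ∞ for all x,y ∈ X. Then there is a map F : X → ℝ^{m(2+⌈log₂(1/ε)⌉)} with the ℓ₁ norm such that for all x,y ∈ X: (1−ε)·Σ_{i∈ℤ} 2^i·‖f_i(x)−f_i(y)‖₁ − 2·ζ(x,y) ≤ ‖F(x)−F(y)‖₁ ≤ Σ_{i∈ℤ} 2^i·‖f_i(x)−f_i(y)‖₁. -/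
open scoped Classical

/-!
Split the scales into the residue classes modulo `D = 2 + ⌈log₂ (1/ε)⌉` and let
`F(x)_{k,r} = ∑_{i ≡ r} 2^i (f_i(x)_k - f_i(x₀)_k)`; the upper bound is the triangle inequality.
For the lower bound fix a coordinate and write `d_i = f_i(x)_k - f_i(y)_k`. The term `ζ` charges
the full weight `2^i |d_i|` at every scale except the first nonzero one and those with
`|d_i| = 1`. In one residue class, the largest uncharged scale `b` dominates the class sum: any
other uncharged scale of the class lies at least `D` below `b` and forces `|d_b| = 1`, so together
they weigh at most `2^(b-D+1) ≤ (ε/2) 2^b`. Hence the class sum is at least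
`2 (uncharged weight) - (1 + ε) (total weight)` of the class, and summing over classes gives
`(1 - ε) ∑ 2^i |d_i| - 2ζ`.
-/

open Set

theorem two_mul_norm_sub_tsum_norm_le_norm_tsum {ι E : Type*} [NormedAddCommGroup E]
    [CompleteSpace E] {a : ι → E} (ha : Summable fun i => ‖a i‖) (b : ι) :
    2 * ‖a b‖ - ∑' i, ‖a i‖ ≤ ‖∑' i, a i‖ := by
  have hrest : Summable fun i => ‖if i = b then 0 else a i‖ :=
    ha.of_nonneg_of_le (fun _ => norm_nonneg _) fun i => by split_ifs <;> simp
  have hnorm : ‖∑' i, if i = b then 0 else a i‖ ≤ ∑' i, if i = b then 0 else ‖a i‖ :=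
    (norm_tsum_le_tsum_norm hrest).trans_eq (tsum_congr fun i => by split_ifs <;> simp)
  rw [ha.of_norm.tsum_eq_add_tsum_ite b, ha.tsum_eq_add_tsum_ite b]
  have htri := norm_sub_le (a b + ∑' i, if i = b then 0 else a i) (∑' i, if i = b then 0 else a i)
  rw [add_sub_cancel_right] at htri
  linarith

theorem sum_indicator_fiber {ι κ M : Type*} [Fintype κ] [AddCommMonoid M] (g : ι → κ)
    (f : ι → M) (i : ι) : ∑ r, (g ⁻¹' {r}).indicator f i = f i := by
  simp [Set.indicator_apply]

theorem tsum_eq_sum_tsum_indicator_fiber {ι κ E : Type*} [Fintype κ] [NormedAddCommGroup E]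
    [CompleteSpace E] (g : ι → κ) {f : ι → E} (hf : Summable f) :
    ∑' i, f i = ∑ r, ∑' i, (g ⁻¹' {r}).indicator f i := by
  rw [← Summable.tsum_finsetSum fun r _ => hf.indicator _]
  exact tsum_congr fun i => (sum_indicator_fiber g f i).symm

theorem sum_norm_tsum_indicator_fiber_le {ι κ E : Type*} [Fintype κ] [NormedAddCommGroup E]
    [CompleteSpace E] (g : ι → κ) {a : ι → E} (ha : Summable fun i => ‖a i‖) :
    ∑ r, ‖∑' i, (g ⁻¹' {r}).indicator a i‖ ≤ ∑' i, ‖a i‖ := by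
  rw [tsum_eq_sum_tsum_indicator_fiber g ha]
  refine Finset.sum_le_sum fun r _ => ?_
  simp_rw [← norm_indicator_eq_indicator_norm]
  exact norm_tsum_le_tsum_norm <| by
    simpa only [norm_indicator_eq_indicator_norm] using ha.indicator _

theorem hasSum_indicator_Iic_zpow_two (c : ℤ) :
    HasSum ((Iic c).indicator fun i : ℤ => (2 : ℝ) ^ i) (2 ^ (c + 1)) := by
  have hinj : Function.Injective fun n : ℕ => c - n := fun m n h => by simpa using h
  refine (hinj.hasSum_iff fun i hi => indicator_of_notMem (fun hic => hi ?_) _).1 ?_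
  · exact ⟨(c - i).toNat, by simp only [mem_Iic] at hic; simp only; omega⟩
  · have hcomp : (Iic c).indicator (fun i : ℤ => (2 : ℝ) ^ i) ∘ (fun n : ℕ => c - n) =
        fun n => 2 ^ c * (1 / 2) ^ n := funext fun n => by
      rw [Function.comp_apply, indicator_of_mem (by simp), zpow_sub₀ two_ne_zero, zpow_natCast,
        one_div, inv_pow, div_eq_mul_inv]
    rw [hcomp, zpow_add_one₀ two_ne_zero]
    exact hasSum_geometric_two.mul_left _

/-- The scales at which `ζ` charges nothing (besides those with `d i = 0`). -/
def leadingOrSaturated (d : ℤ → ℝ) : Set ℤ :=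
  {i | d i ≠ 0 ∧ ((∀ j < i, d j = 0) ∨ |d i| = 1)}

namespace leadingOrSaturated

variable {d : ℤ → ℝ}

theorem abs_eq_one_of_lt {i j : ℤ} (hi : i ∈ leadingOrSaturated d)
    (hj : j ∈ leadingOrSaturated d) (hij : i < j) : |d j| = 1 :=
  hj.2.resolve_left fun hlead => hi.1 (hlead i hij)

theorem bddAbove (hs : Summable fun i => (2 : ℝ) ^ i * |d i|) :
    BddAbove (leadingOrSaturated d) := by
  rcases (leadingOrSaturated d).eq_empty_or_nonempty with hempty | ⟨i₀, hi₀⟩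
  · simp [hempty]
  obtain ⟨n, hn⟩ := pow_unbounded_of_one_lt (∑' i, (2 : ℝ) ^ i * |d i|) one_lt_two
  refine ⟨max i₀ n, fun i hi => ?_⟩
  rcases lt_or_ge i₀ i with hlt | hle
  · have hterm : (2 : ℝ) ^ i ≤ ∑' i, (2 : ℝ) ^ i * |d i| := by
      simpa [abs_eq_one_of_lt hi₀ hi hlt] using hs.le_tsum i fun j _ => by positivity
    have : (2 : ℝ) ^ i < 2 ^ (n : ℤ) := by rw [zpow_natCast]; linarith
    exact le_max_of_le_right ((zpow_lt_zpow_iff_right₀ one_lt_two).1 this).le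
  · exact le_max_of_le_left hle

theorem zeta_summand_eq {i : ℤ} (hd : |d i| ≤ 1) :
    (if ∃ j, j < i ∧ d j ≠ 0 then (2 : ℝ) ^ i * (|d i| - ⌊|d i|⌋) else 0) =
      2 ^ i * |d i| - (leadingOrSaturated d).indicator (fun i => 2 ^ i * |d i|) i := by
  by_cases h0 : d i = 0
  · simp [h0]
  by_cases hprev : ∃ j, j < i ∧ d j ≠ 0
  · rw [if_pos hprev]
    rcases hd.eq_or_lt with h1 | h1
    · rw [indicator_of_mem (show i ∈ leadingOrSaturated d from ⟨h0, Or.inr h1⟩), h1]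
      simp
    · obtain ⟨j, hji, hj⟩ := hprev
      have hnot : i ∉ leadingOrSaturated d := fun hi =>
        hi.2.elim (fun hlead => hj (hlead j hji)) h1.ne
      rw [indicator_of_notMem hnot, Int.floor_eq_zero_iff.2 ⟨abs_nonneg _, h1⟩]
      simp
  · rw [if_neg hprev, indicator_of_mem (show i ∈ leadingOrSaturated d from
      ⟨h0, Or.inl fun j hji => not_not.1 fun hj => hprev ⟨j, hji, hj⟩⟩), sub_self]

variable {C : Set ℤ} {D : ℤ} {ε : ℝ}

theorem indicator_inter_le_of_isGreatest (hd : ∀ i, |d i| ≤ 1)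
    (hC : ∀ i ∈ C, ∀ j ∈ C, i < j → i + D ≤ j) {b : ℤ}
    (hb : IsGreatest (C ∩ leadingOrSaturated d) b) (hsat : |d b| = 1) (j : ℤ) :
    (C ∩ leadingOrSaturated d).indicator (fun i => 2 ^ i * |d i|) j ≤
      (Iic (b - D)).indicator (fun i : ℤ => (2 : ℝ) ^ i) j + if j = b then 2 ^ b else 0 := by
  by_cases hj : j ∈ C ∩ leadingOrSaturated d
  · rw [indicator_of_mem hj]
    rcases eq_or_ne j b with rfl | hjb
    · simpa [hsat] using indicator_nonneg (fun i _ => by positivity) _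
    · have hjD : j ∈ Iic (b - D) := by
        have := hC j hj.1 b hb.1.1 (lt_of_le_of_ne (hb.2 hj) hjb)
        simp only [mem_Iic]
        omega
      rw [indicator_of_mem hjD, if_neg hjb, add_zero]
      exact mul_le_of_le_one_right (by positivity) (hd j)
  · rw [indicator_of_notMem hj]
    exact add_nonneg (indicator_nonneg (fun i _ => by positivity) _) (by split_ifs <;> positivity)

theorem two_mul_tsum_indicator_le_of_isGreatest (hd : ∀ i, |d i| ≤ 1)
    (hC : ∀ i ∈ C, ∀ j ∈ C, i < j → i + D ≤ j) (hε : 0 ≤ ε) (hεD : (2 : ℝ) ^ (2 - D) ≤ ε)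
    {b : ℤ} (hb : IsGreatest (C ∩ leadingOrSaturated d) b) :
    2 * ∑' i, (C ∩ leadingOrSaturated d).indicator (fun i => 2 ^ i * |d i|) i ≤
      (2 + ε) * (2 ^ b * |d b|) := by
  by_cases honly : ∀ i ∈ C ∩ leadingOrSaturated d, i = b
  · have hsingle : C ∩ leadingOrSaturated d = {b} :=
      Set.eq_singleton_iff_unique_mem.2 ⟨hb.1, honly⟩
    rw [hsingle, tsum_eq_single b fun i hi => indicator_of_notMem (s := {b}) hi _,
      indicator_of_mem (mem_singleton b)]
    nlinarith [show 0 ≤ (2 : ℝ) ^ b * |d b| by positivity]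
  push Not at honly
  obtain ⟨i, hi, hib⟩ := honly
  have hsat : |d b| = 1 := abs_eq_one_of_lt hi.2 hb.1.2 (lt_of_le_of_ne (hb.2 hi) hib)
  have hle := indicator_inter_le_of_isGreatest hd hC hb hsat
  have hsum := (hasSum_indicator_Iic_zpow_two (b - D)).add (hasSum_ite_eq b ((2 : ℝ) ^ b))
  have hbound := Summable.tsum_le_tsum hle
    (hsum.summable.of_nonneg_of_le (fun j => indicator_nonneg (fun i _ => by positivity) j) hle)
    hsum.summable
  rw [hsum.tsum_eq] at hbound
  have hpow : (2 : ℝ) ^ (b - D + 1) * 2 = 2 ^ (2 - D) * 2 ^ b := by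
    rw [← zpow_add_one₀ two_ne_zero, ← zpow_add₀ two_ne_zero]
    ring_nf
  rw [hsat, mul_one]
  nlinarith [show (0 : ℝ) < 2 ^ b by positivity]

theorem two_mul_tsum_sub_le_abs_tsum_indicator (hd : ∀ i, |d i| ≤ 1)
    (hs : Summable fun i => (2 : ℝ) ^ i * |d i|) (hC : ∀ i ∈ C, ∀ j ∈ C, i < j → i + D ≤ j)
    (hε : 0 ≤ ε) (hεD : (2 : ℝ) ^ (2 - D) ≤ ε) :
    2 * ∑' i, (C ∩ leadingOrSaturated d).indicator (fun i => 2 ^ i * |d i|) i -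
        (1 + ε) * ∑' i, C.indicator (fun i => 2 ^ i * |d i|) i ≤
      |∑' i, C.indicator (fun i => 2 ^ i * d i) i| := by
  have hCw : 0 ≤ ∑' i, C.indicator (fun i => (2 : ℝ) ^ i * |d i|) i :=
    tsum_nonneg <| indicator_nonneg fun i _ => by positivity
  rcases (C ∩ leadingOrSaturated d).eq_empty_or_nonempty with hempty | hne
  · rw [hempty]
    simp only [indicator_empty, tsum_zero, mul_zero, zero_sub]
    nlinarith [abs_nonneg (∑' i, C.indicator (fun i => (2 : ℝ) ^ i * d i) i)]
  obtain ⟨b, hb⟩ := ((bddAbove hs).mono inter_subset_right).exists_isGreatest_of_nonempty hne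
  have hnorm : ∀ i, ‖C.indicator (fun i => (2 : ℝ) ^ i * d i) i‖ =
      C.indicator (fun i => 2 ^ i * |d i|) i := fun i => by
    simp [norm_indicator_eq_indicator_norm]
  have hdom := two_mul_norm_sub_tsum_norm_le_norm_tsum
    (a := C.indicator fun i => (2 : ℝ) ^ i * d i) (by simpa only [hnorm] using hs.indicator C) b
  simp only [hnorm, Real.norm_eq_abs, indicator_of_mem hb.1.1, abs_mul,
    abs_of_pos (zpow_pos (two_pos : (0 : ℝ) < 2) b)] at hdom
  have hwb : 2 ^ b * |d b| ≤ ∑' i, C.indicator (fun i => (2 : ℝ) ^ i * |d i|) i := by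
    simpa [indicator_of_mem hb.1.1] using
      (hs.indicator C).le_tsum b fun j _ => indicator_nonneg (fun i _ => by positivity) j
  linarith [two_mul_tsum_indicator_le_of_isGreatest hd hC hε hεD hb,
    mul_le_mul_of_nonneg_left hwb hε]

end leadingOrSaturated

theorem multiscale_lower_bound {ι : Type*} [Fintype ι] {d : ℤ → ℝ} {D : ℤ} {ε : ℝ} (κ : ℤ → ι)
    (hκ : ∀ i j, κ i = κ j → i < j → i + D ≤ j) (hd : ∀ i, |d i| ≤ 1)
    (hs : Summable fun i => (2 : ℝ) ^ i * |d i|) (hε : 0 ≤ ε) (hεD : (2 : ℝ) ^ (2 - D) ≤ ε) :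
    (1 - ε) * ∑' i, 2 ^ i * |d i| -
        2 * ∑' i, (if ∃ j, j < i ∧ d j ≠ 0 then (2 : ℝ) ^ i * (|d i| - ⌊|d i|⌋) else 0) ≤
      ∑ r, |∑' i, (κ ⁻¹' {r}).indicator (fun i => 2 ^ i * d i) i| := by
  have hL := hs.indicator (leadingOrSaturated d)
  rw [tsum_congr fun i => leadingOrSaturated.zeta_summand_eq (hd i), hs.tsum_sub hL,
    tsum_eq_sum_tsum_indicator_fiber κ hs, tsum_eq_sum_tsum_indicator_fiber κ hL]
  simp_rw [indicator_indicator]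
  calc _ = ∑ r, (2 * ∑' i, (κ ⁻¹' {r} ∩ leadingOrSaturated d).indicator
          (fun i => 2 ^ i * |d i|) i -
        (1 + ε) * ∑' i, (κ ⁻¹' {r}).indicator (fun i => 2 ^ i * |d i|) i) := by
        rw [Finset.sum_sub_distrib, ← Finset.mul_sum, ← Finset.mul_sum]
        ring
    _ ≤ _ := Finset.sum_le_sum fun r _ =>
        leadingOrSaturated.two_mul_tsum_sub_le_abs_tsum_indicator hd hs
          (fun i hi j hj => hκ i j (hi.trans hj.symm)) hε hεD

theorem exists_multiscale_map_of_separated {X K ι : Type*} [Fintype K] [Fintype ι] {D : ℤ}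
    {ε : ℝ} (κ : ℤ → ι) (hκ : ∀ i j, κ i = κ j → i < j → i + D ≤ j) (hε : 0 ≤ ε)
    (hεD : (2 : ℝ) ^ (2 - D) ≤ ε) (x₀ : X) (f : ℤ → X → K → ℝ)
    (hf : ∀ i x y k, |f i x k - f i y k| ≤ 1)
    (hsum : ∀ x y : X, Summable fun i : ℤ => (2 : ℝ) ^ i * ∑ k, |f i x k - f i y k|) :
    ∃ F : X → K × ι → ℝ, ∀ x y : X,
      ((1 - ε) * (∑' i : ℤ, (2 : ℝ) ^ i * ∑ k, |f i x k - f i y k|) -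
          2 * (∑ k, ∑' i : ℤ,
            if ∃ j : ℤ, j < i ∧ f j x k - f j y k ≠ 0 then
              (2 : ℝ) ^ i * (|f i x k - f i y k| - (⌊|f i x k - f i y k|⌋ : ℝ))
            else 0) ≤
        ∑ p, |F x p - F y p|) ∧
      ∑ p, |F x p - F y p| ≤ ∑' i : ℤ, (2 : ℝ) ^ i * ∑ k, |f i x k - f i y k| := by
  have hsk : ∀ x y k, Summable fun i : ℤ => (2 : ℝ) ^ i * |f i x k - f i y k| :=
    fun x y k => (hsum x y).of_nonneg_of_le (fun i => by positivity) fun i => by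
      gcongr
      exact Finset.single_le_sum (f := fun k => |f i x k - f i y k|) (fun k _ => abs_nonneg _)
        (Finset.mem_univ k)
  have hnorm : ∀ x y k, Summable fun i : ℤ => ‖(2 : ℝ) ^ i * (f i x k - f i y k)‖ :=
    fun x y k => by simpa [abs_mul] using hsk x y k
  -- Only differences are summable against `2^i`, hence the base point.
  let F : X → K × ι → ℝ := fun x p =>
    ∑' i, (κ ⁻¹' {p.2}).indicator (fun i => 2 ^ i * (f i x p.1 - f i x₀ p.1)) i
  have hdiff : ∀ x y k r, F x (k, r) - F y (k, r) =
      ∑' i, (κ ⁻¹' {r}).indicator (fun i => 2 ^ i * (f i x k - f i y k)) i := by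
    intro x y k r
    rw [← ((hnorm x x₀ k).of_norm.indicator _).tsum_sub ((hnorm y x₀ k).of_norm.indicator _)]
    refine tsum_congr fun i => ?_
    by_cases hi : i ∈ κ ⁻¹' {r} <;> simp [hi]
    ring
  have htotal : ∀ x y, ∑' i : ℤ, (2 : ℝ) ^ i * ∑ k, |f i x k - f i y k| =
      ∑ k, ∑' i : ℤ, (2 : ℝ) ^ i * |f i x k - f i y k| := fun x y => by
    simp_rw [Finset.mul_sum]
    exact Summable.tsum_finsetSum fun k _ => hsk x y k
  refine ⟨F, fun x y => ?_⟩
  rw [htotal, Finset.mul_sum, Finset.mul_sum, ← Finset.sum_sub_distrib]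
  simp only [Fintype.sum_prod_type, hdiff]
  constructor
  · exact Finset.sum_le_sum fun k _ =>
      multiscale_lower_bound κ hκ (fun i => hf i x y k) (hsk x y k) hε hεD
  · refine Finset.sum_le_sum fun k _ => ?_
    simpa [abs_mul] using sum_norm_tsum_indicator_fiber_le κ (hnorm x y k)

theorem ZMod.add_le_of_intCast_eq_intCast {n : ℕ} {i j : ℤ} (h : (i : ZMod n) = j)
    (hij : i < j) : i + n ≤ j := by
  have := Int.le_of_dvd (by omega) ((ZMod.intCast_eq_intCast_iff_dvd_sub i j n).1 h)
  omega

theorem two_zpow_neg_ceil_logb_one_div_le {ε : ℝ} (hε : 0 < ε) :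
    (2 : ℝ) ^ (-(⌈Real.logb 2 (1 / ε)⌉₊ : ℤ)) ≤ ε := by
  have hceil : 1 / ε ≤ (2 : ℝ) ^ (⌈Real.logb 2 (1 / ε)⌉₊ : ℝ) :=
    (Real.logb_le_iff_le_rpow one_lt_two (by positivity)).1 (Nat.le_ceil _)
  rw [Real.rpow_natCast] at hceil
  rw [zpow_neg, zpow_natCast, ← one_div]
  exact (one_div_le hε (by positivity)).1 hceil

theorem multiscale_combination_vector_general (ε : ℝ) (hε : 0 < ε) (m : ℕ)
    (X : Type) (f : ℤ → X → Fin m → ℝ)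
    (hf : ∀ (i : ℤ) (x : X) (k : Fin m), f i x k ∈ Set.Icc (0 : ℝ) 1)
    (hsum : ∀ x y : X, Summable fun i : ℤ => (2 : ℝ) ^ i * ∑ k, |f i x k - f i y k|) :
    ∃ F : X → Fin (m * (2 + ⌈Real.logb 2 (1 / ε)⌉₊)) → ℝ,
      ∀ x y : X,
        ((1 - ε) * (∑' i : ℤ, (2 : ℝ) ^ i * ∑ k, |f i x k - f i y k|) -
            2 * (∑ k : Fin m, ∑' i : ℤ,
              if ∃ j : ℤ, j < i ∧ f j x k - f j y k ≠ 0 then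
                (2 : ℝ) ^ i * (|f i x k - f i y k| - (⌊|f i x k - f i y k|⌋ : ℝ))
              else 0) ≤
          ∑ l, |F x l - F y l|) ∧
        ∑ l, |F x l - F y l| ≤ ∑' i : ℤ, (2 : ℝ) ^ i * ∑ k, |f i x k - f i y k| := by
  set D := 2 + ⌈Real.logb 2 (1 / ε)⌉₊
  rcases isEmpty_or_nonempty X with _ | ⟨⟨x₀⟩⟩
  · exact ⟨fun _ _ => 0, fun x => isEmptyElim x⟩
  have hεD : (2 : ℝ) ^ (2 - (D : ℤ)) ≤ ε := by
    simpa [D, sub_add_cancel_left] using two_zpow_neg_ceil_logb_one_div_le hε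
  obtain ⟨F, hF⟩ := exists_multiscale_map_of_separated (fun i : ℤ => (i : ZMod D))
    (fun i j h hij => ZMod.add_le_of_intCast_eq_intCast h hij) hε.le hεD x₀ f
    (fun i x y k => abs_sub_le_of_nonneg_of_le (hf i x k).1 (hf i x k).2 (hf i y k).1 (hf i y k).2)
    hsum
  let e : Fin (m * D) ≃ Fin m × ZMod D :=
    finProdFinEquiv.symm.trans ((Equiv.refl _).prodCongr (ZMod.finEquiv D).toEquiv)
  refine ⟨fun x l => F x (e l), fun x y => ?_⟩
  simpa only [e.sum_comp fun p => |F x p - F y p|] using hF x y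

/-- Corollary 3.5: the vector-valued version of the multiscale combination
lemma.  Given `f_i : X → [0,1]^m` with `Σ_i 2^i ‖f_i(x) − f_i(y)‖₁ < ∞`, there
is a map `F` into `ℓ₁` of dimension `m(2 + ⌈log₂(1/ε)⌉)` with
`(1−ε)·Σ_i 2^i‖f_i(x)−f_i(y)‖₁ − 2ζ(x,y) ≤ ‖F(x)−F(y)‖₁
  ≤ Σ_i 2^i‖f_i(x)−f_i(y)‖₁`. -/
theorem multiscale_combination_vector (ε : ℝ) (hε : 0 < ε) (hε1 : ε < 1) (m : ℕ)
    (X : Type) [MetricSpace X] (f : ℤ → X → Fin m → ℝ)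
    (hf : ∀ (i : ℤ) (x : X) (k : Fin m), f i x k ∈ Set.Icc (0 : ℝ) 1)
    (hsum : ∀ x y : X, Summable fun i : ℤ => (2 : ℝ) ^ i * ∑ k, |f i x k - f i y k|) :
    ∃ F : X → Fin (m * (2 + ⌈Real.logb 2 (1 / ε)⌉₊)) → ℝ,
      ∀ x y : X,
        ((1 - ε) * (∑' i : ℤ, (2 : ℝ) ^ i * ∑ k, |f i x k - f i y k|) -
            2 * (∑ k : Fin m, ∑' i : ℤ,
              if ∃ j : ℤ, j < i ∧ f j x k - f j y k ≠ 0 then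
                (2 : ℝ) ^ i * (|f i x k - f i y k| - (⌊|f i x k - f i y k|⌋ : ℝ))
              else 0) ≤
          ∑ l, |F x l - F y l|) ∧
        ∑ l, |F x l - F y l| ≤ ∑' i : ℤ, (2 : ℝ) ^ i * ∑ k, |f i x k - f i y k| :=
  multiscale_combination_vector_general ε hε m X f hf hsum
end

section
/- Let u,w ∈ V be vertices with c = χ(w,p(w)) = χ(u,p(u)) and d_T(w,v_c) ≤ d_T(u,v_c). Then for all i ∈ ℤ, τ_i(w) ≤ τ_i(u). -/
open scoped Classical

noncomputable section

private lemma FinTree.anc_trans' (T : FinTree) {x y z : T.V} (h1 : T.Anc x y)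
    (h2 : T.Anc y z) : T.Anc x z := by
  obtain ⟨n, hn⟩ := h1; obtain ⟨m, hm⟩ := h2
  exact ⟨n + m, by rw [Function.iterate_add_apply, hm, hn]⟩

private lemma FinTree.anc_total' (T : FinTree) {x y u : T.V} (h1 : T.Anc x u)
    (h2 : T.Anc y u) : T.Anc x y ∨ T.Anc y x := by
  obtain ⟨n, hn⟩ := h1; obtain ⟨m, hm⟩ := h2
  rcases le_total n m with h | h
  · right
    exact ⟨m - n, by rw [← hn, ← Function.iterate_add_apply, Nat.sub_add_cancel h, hm]⟩
  · left
    exact ⟨n - m, by rw [← hm, ← Function.iterate_add_apply, Nat.sub_add_cancel h, hn]⟩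

private lemma FinTree.img_eq' (T : FinTree) (χ : T.V → ℕ) (hχ : T.IsMonotone χ)
    {w u : T.V} (hw : w ≠ T.root) (hu : u ≠ T.root) (hc : χ w = χ u)
    (hanc : T.Anc w u) :
    (T.pathToRoot w).image χ = (T.pathToRoot u).image χ := by
  apply Finset.Subset.antisymm
  · apply Finset.image_subset_image
    intro e he
    simp only [FinTree.pathToRoot, Finset.mem_filter, Finset.mem_univ, true_and] at he ⊢
    exact ⟨he.1, T.anc_trans' he.2 hanc⟩
  · intro c hcm
    simp only [Finset.mem_image] at hcm ⊢
    obtain ⟨e, he, rfl⟩ := hcm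
    simp only [FinTree.pathToRoot, Finset.mem_filter, Finset.mem_univ, true_and] at he
    rcases T.anc_total' he.2 hanc with h | h
    · exact ⟨e, by simp only [FinTree.pathToRoot, Finset.mem_filter, Finset.mem_univ,
        true_and]; exact ⟨he.1, h⟩, rfl⟩
    · refine ⟨w, ?_, ?_⟩
      · simp only [FinTree.pathToRoot, Finset.mem_filter, Finset.mem_univ, true_and]
        exact ⟨hw, ⟨0, rfl⟩⟩
      · exact ((hχ w u hw hu hc).2 e he.1 h he.2).symm

private lemma real_helper (d s a : ℝ) (ha : 0 ≤ a) :
    d - min d (s + a) = max 0 (d - min d s - a) := by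
  rcases le_total d s with h | h
  · rw [min_eq_left h, min_eq_left (by linarith), sub_self, max_eq_left (by linarith)]
  · rw [min_eq_right h]
    rcases le_total d (s + a) with h2 | h2
    · rw [min_eq_left h2, sub_self, max_eq_left (by linarith)]
    · rw [min_eq_right h2, max_eq_right (by linarith)]; ring


/-- `τ_i` does not decrease as one moves away from `v_c` along `γ_c`. -/
theorem tau_monotone_along_color (T : FinTree) (χ : T.V → ℕ) (hχ : T.IsMonotone χ)
    (c₀ : ℕ) (hc₀ : ∀ e : T.V, e ≠ T.root → χ e ≠ c₀)
    (hpos : ∃ e : T.V, e ≠ T.root ∧ 0 < T.len e)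
    (τ : ℤ → T.V → ℕ) (hτ : T.IsScaleSelector χ c₀ τ)
    (u w : T.V) (hu : u ≠ T.root) (hw : w ≠ T.root) (hc : χ w = χ u)
    (hd : T.dist w (T.vcol χ (χ w)) ≤ T.dist u (T.vcol χ (χ u))) :
    ∀ i : ℤ, τ i w ≤ τ i u := by
  obtain ⟨hlow, hspec⟩ := hτ
  have himg : (T.pathToRoot w).image χ = (T.pathToRoot u).image χ := by
    rcases (hχ w u hw hu hc).1 with h | h
    · exact T.img_eq' χ hχ hw hu hc h
    · exact (T.img_eq' χ hχ hu hw hc.symm h).symm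
  rw [hc] at hd
  have hkey : ∀ k : ℤ, T.iMin χ ≤ k →
      T.dist w (T.vcol χ (χ u)) - min (T.dist w (T.vcol χ (χ u)))
          (∑ j ∈ Finset.Ico (T.iMin χ) k, (2 : ℝ) ^ j * (τ j w : ℝ)) ≤
        T.dist u (T.vcol χ (χ u)) - min (T.dist u (T.vcol χ (χ u)))
          (∑ j ∈ Finset.Ico (T.iMin χ) k, (2 : ℝ) ^ j * (τ j u : ℝ)) →
      τ k w ≤ τ k u := by
    intro k hk hR
    rw [← Nat.cast_le (α := ℤ), hspec w hw k hk, hspec u hu k hk, hc, himg]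
    refine min_le_min (Int.ceil_le_ceil ?_) le_rfl
    gcongr
  have main : ∀ k : ℤ, T.iMin χ ≤ k → (τ k w ≤ τ k u ∧
      T.dist w (T.vcol χ (χ u)) - min (T.dist w (T.vcol χ (χ u)))
          (∑ j ∈ Finset.Ico (T.iMin χ) k, (2 : ℝ) ^ j * (τ j w : ℝ)) ≤
        T.dist u (T.vcol χ (χ u)) - min (T.dist u (T.vcol χ (χ u)))
          (∑ j ∈ Finset.Ico (T.iMin χ) k, (2 : ℝ) ^ j * (τ j u : ℝ))) := by
    refine Int.le_induction ?_ ?_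
    ·
      have hmax : ∀ d : ℝ, d - min d 0 = max 0 d := by
        intro d
        rcases le_total d 0 with h | h
        · rw [min_eq_left h, max_eq_left h, sub_self]
        · rw [min_eq_right h, max_eq_right h, sub_zero]
      have hR : T.dist w (T.vcol χ (χ u)) - min (T.dist w (T.vcol χ (χ u)))
          (∑ j ∈ Finset.Ico (T.iMin χ) (T.iMin χ), (2 : ℝ) ^ j * (τ j w : ℝ)) ≤
          T.dist u (T.vcol χ (χ u)) - min (T.dist u (T.vcol χ (χ u)))
          (∑ j ∈ Finset.Ico (T.iMin χ) (T.iMin χ), (2 : ℝ) ^ j * (τ j u : ℝ)) := by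
        simp only [Finset.Ico_self, Finset.sum_empty]
        rw [hmax, hmax]
        exact max_le_max le_rfl hd
      exact ⟨hkey _ le_rfl hR, hR⟩
    · intro n hn ih
      obtain ⟨htn, hRn⟩ := ih
      have hAw := hspec w hw n hn
      have hAu := hspec u hu n hn
      rw [hc, himg] at hAw
      set Dw := T.dist w (T.vcol χ (χ u)) with hDw
      set Du := T.dist u (T.vcol χ (χ u)) with hDu
      set Sw := ∑ j ∈ Finset.Ico (T.iMin χ) n, (2 : ℝ) ^ j * (τ j w : ℝ) with hSw
      set Su := ∑ j ∈ Finset.Ico (T.iMin χ) n, (2 : ℝ) ^ j * (τ j u : ℝ) with hSu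
      set B := T.phi χ c₀ (χ u) - ∑ c' ∈ (T.pathToRoot u).image χ,
          (τ n (T.vcol χ c') : ℤ) with hB
      have hRsucc : Dw - min Dw
          (∑ j ∈ Finset.Ico (T.iMin χ) (n + 1), (2 : ℝ) ^ j * (τ j w : ℝ)) ≤
          Du - min Du
          (∑ j ∈ Finset.Ico (T.iMin χ) (n + 1), (2 : ℝ) ^ j * (τ j u : ℝ)) := by
        have hins : Finset.Ico (T.iMin χ) (n + 1) = insert n (Finset.Ico (T.iMin χ) n) := by
          ext x
          simp only [Finset.mem_Ico, Finset.mem_insert]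
          omega
        rw [hins, Finset.sum_insert Finset.right_notMem_Ico,
          Finset.sum_insert Finset.right_notMem_Ico,
          add_comm ((2 : ℝ) ^ n * (τ n w : ℝ)), add_comm ((2 : ℝ) ^ n * (τ n u : ℝ)),
          ← hSw, ← hSu,
          real_helper _ _ _ (by positivity), real_helper _ _ _ (by positivity)]
        rcases le_or_gt ⌈(Dw - min Dw Sw) / (2 : ℝ) ^ n⌉ B with h1 | h1
        · have hw2 : (τ n w : ℤ) = ⌈(Dw - min Dw Sw) / (2 : ℝ) ^ n⌉ := by
            rw [hAw, min_eq_left h1]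
          have hle : (Dw - min Dw Sw) / (2 : ℝ) ^ n ≤ ((τ n w : ℤ) : ℝ) := by
            rw [hw2]; exact Int.le_ceil _
          rw [div_le_iff₀ (by positivity)] at hle
          push_cast at hle
          have h0 : Dw - min Dw Sw - (2 : ℝ) ^ n * (τ n w : ℝ) ≤ 0 := by nlinarith
          rw [max_eq_left h0]
          exact le_max_left _ _
        · have hcc : ⌈(Dw - min Dw Sw) / (2 : ℝ) ^ n⌉ ≤
              ⌈(Du - min Du Su) / (2 : ℝ) ^ n⌉ := by
            refine Int.ceil_le_ceil ?_
            gcongr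
          have hw2 : (τ n w : ℤ) = B := by rw [hAw, min_eq_right h1.le]
          have hu2 : (τ n u : ℤ) = B := by
            rw [hAu, min_eq_right (le_trans h1.le hcc)]
          have heq : τ n w = τ n u := by
            have : (τ n w : ℤ) = (τ n u : ℤ) := hw2.trans hu2.symm
            exact_mod_cast this
          rw [heq]
          exact max_le_max le_rfl (by linarith)
      exact ⟨hkey _ (by linarith) hRsucc, hRsucc⟩
  intro i
  rcases lt_or_ge i (T.iMin χ) with hi | hi
  · rw [hlow w i hi, hlow u i hi]
  · exact (main i hi).1


end
end
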